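/- arXiv:1507.08777 — 2 statements merged into one kernel-verified Lean document; each statement's English description precedes it below -/
import Mathlib

section
/- (Theorem 1) Suppose 𝒱 is Lipschitz on [0,T] and let Z̃(t) = Z₀ + ∫₀ᵗ 𝒱(σ)dσ. Then there exists a constant C > 0 (depending only on T, the Lipschitz constant of 𝒱, ℏ and m) such that for every ε ∈ (0,1], every j ∈ {1,2,3,4} and every integer n ≥ 0 with nε ≤ T, ‖Z^j_ε(nε) − Z̃(nε)‖ ≤ C·√ε. In particular each process Z^j_ε converges to the classical trajectory Z̃ as ε → 0⁺. -/
/-!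
Subtracting `γ sⁿuʲ` makes the recursion telescope:
`Z^j_ε(nε) = Z₀ + ε ∑_{k<n} 𝒱(t_k) + γ (sⁿuʲ - uʲ)`, where `t_k = 4⌊(k+1)/4⌋ε` is the start of
the block of four steps containing step `k+1`, so `|t_k - σ| ≤ 3ε` on `[kε, (k+1)ε]`.
Lipschitz continuity then bounds the gap between this Riemann sum and `∫₀^{nε} 𝒱` by
`3Kε · nε ≤ 3KTε`, while `|γ| ‖sⁿuʲ - uʲ‖ ≤ 4 √(ℏ/(4m)) √ε`; and `ε ≤ √ε` for `ε ≤ 1`.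
-/

noncomputable section

open Complex Finset

/-- The four vertices of the unit square, viewed in `ℂ²`. -/
def uC : Fin 4 → EuclideanSpace ℂ (Fin 2) :=
  ![(WithLp.equiv 2 (Fin 2 → ℂ)).symm ![1, 1],
    (WithLp.equiv 2 (Fin 2 → ℂ)).symm ![1, -1],
    (WithLp.equiv 2 (Fin 2 → ℂ)).symm ![-1, -1],
    (WithLp.equiv 2 (Fin 2 → ℂ)).symm ![-1, 1]]

/-- `sIter n j` is `sⁿ u^j` for the cyclic permutation `s` with
`s u¹ = u², s u² = u³, s u³ = u⁴, s u⁴ = u¹`. -/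
def sIter (n : ℕ) (j : Fin 4) : EuclideanSpace ℂ (Fin 2) := uC (j + (Fin.ofNat 4 n : Fin 4))

open scoped NNReal
open Set MeasureTheory

theorem eq_add_sum_add_sub_of_forall_succ {G : Type*} [AddCommGroup G] {x a w : ℕ → G}
    (h : ∀ n, x (n + 1) = x n + a n + (w (n + 1) - w n)) (n : ℕ) :
    x n = x 0 + ∑ k ∈ range n, a k + (w n - w 0) := by
  rw [eq_sum_range_sub x n, ← sum_range_sub w n, add_assoc, ← sum_add_distrib]
  congr 1
  exact sum_congr rfl fun k _ => by rw [h]; abel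

section RiemannSum

variable {E : Type*} [NormedAddCommGroup E] [NormedSpace ℝ E] [CompleteSpace E]

theorem norm_smul_sub_intervalIntegral_le {f : ℝ → E} {a b c M : ℝ} (hab : a ≤ b)
    (hf : IntervalIntegrable f volume a b) (hM : ∀ σ ∈ Ioc a b, ‖f c - f σ‖ ≤ M) :
    ‖(b - a) • f c - ∫ σ in a..b, f σ‖ ≤ M * (b - a) := by
  rw [← intervalIntegral.integral_const,
    ← intervalIntegral.integral_sub intervalIntegrable_const hf]
  calc ‖∫ σ in a..b, (f c - f σ)‖ ≤ M * |b - a| :=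
        intervalIntegral.norm_integral_le_of_norm_le_const (by rwa [uIoc_of_le hab])
    _ = M * (b - a) := by rw [abs_of_nonneg (sub_nonneg.2 hab)]

theorem norm_sum_smul_sub_intervalIntegral_le {f : ℝ → E} {K : ℝ≥0} {T ε δ : ℝ} {n : ℕ}
    {t : ℕ → ℝ} (hf : LipschitzOnWith K f (Icc 0 T)) (hε : 0 ≤ ε) (hnT : n * ε ≤ T)
    (ht : ∀ k < n, t k ∈ Icc 0 T)
    (htσ : ∀ k < n, ∀ σ ∈ Ioc (k * ε) ((k + 1) * ε), |t k - σ| ≤ δ) :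
    ‖∑ k ∈ range n, ε • f (t k) - ∫ σ in (0 : ℝ)..n * ε, f σ‖ ≤ K * δ * (n * ε) := by
  have hstep : ∀ k < n, Icc ((k : ℝ) * ε) ((k + 1) * ε) ⊆ Icc 0 T := by
    intro k hk
    have : ((k : ℝ) + 1) * ε ≤ n * ε := by gcongr; exact_mod_cast hk
    exact Icc_subset_Icc (by positivity) (this.trans hnT)
  have hle (k : ℕ) : (k : ℝ) * ε ≤ (k + 1) * ε := by gcongr; linarith
  have hint : ∀ k < n, IntervalIntegrable f volume (k * ε) ((k + 1) * ε) := fun k hk =>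
    ContinuousOn.intervalIntegrable <|
      hf.continuousOn.mono ((Set.uIcc_of_le (hle k)).trans_subset (hstep k hk))
  have hsplit := intervalIntegral.sum_integral_adjacent_intervals (a := fun k : ℕ => k * ε) (f := f)
    (μ := volume) (n := n) (fun k hk => by simpa using hint k hk)
  simp only [Nat.cast_zero, zero_mul, Nat.cast_succ] at hsplit
  rw [← hsplit, ← sum_sub_distrib]
  calc _ ≤ ∑ k ∈ range n, ‖ε • f (t k) - ∫ σ in (k * ε : ℝ)..(k + 1) * ε, f σ‖ := norm_sum_le _ _
    _ ≤ ∑ _k ∈ range n, K * δ * ε := by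
        refine sum_le_sum fun k hk => ?_
        rw [Finset.mem_range] at hk
        have := norm_smul_sub_intervalIntegral_le (c := t k) (M := K * δ) (hle k) (hint k hk)
          fun σ hσ => by
            rw [← dist_eq_norm]
            refine (hf.dist_le_mul _ (ht k hk) _ (hstep k hk (Ioc_subset_Icc_self hσ))).trans ?_
            exact mul_le_mul_of_nonneg_left (htσ k hk σ hσ) K.2
        rwa [show ((k : ℝ) + 1) * ε - k * ε = ε by ring] at this
    _ = K * δ * (n * ε) := by rw [sum_const, card_range, nsmul_eq_mul]; ring

end RiemannSum

theorem four_mul_succ_div_four_mem_Icc (k : ℕ) :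
    ((4 * ((k + 1) / 4) : ℕ) : ℝ) ∈ Icc ((k : ℝ) - 2) (k + 1) := by
  have h₁ : k ≤ 4 * ((k + 1) / 4) + 2 := by omega
  have h₂ : 4 * ((k + 1) / 4) ≤ k + 1 := by omega
  constructor
  · rw [sub_le_iff_le_add]; exact_mod_cast h₁
  · exact_mod_cast h₂

theorem four_mul_succ_div_four_mul_mem_Icc {k n : ℕ} {ε T : ℝ} (hk : k < n) (hε : 0 ≤ ε)
    (hnT : n * ε ≤ T) : ((4 * ((k + 1) / 4) : ℕ) : ℝ) * ε ∈ Icc 0 T := by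
  have hkn : (k : ℝ) + 1 ≤ n := by exact_mod_cast hk
  have := (four_mul_succ_div_four_mem_Icc k).2
  exact ⟨by positivity, by nlinarith⟩

theorem abs_four_mul_succ_div_four_mul_sub_le {k : ℕ} {ε σ : ℝ} (hε : 0 ≤ ε)
    (hσ : σ ∈ Ioc (k * ε) ((k + 1) * ε)) :
    |((4 * ((k + 1) / 4) : ℕ) : ℝ) * ε - σ| ≤ 3 * ε := by
  obtain ⟨hlo, hhi⟩ := four_mul_succ_div_four_mem_Icc k
  rw [abs_le]
  constructor <;> nlinarith [hσ.1, hσ.2]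

theorem norm_uC (j : Fin 4) : ‖uC j‖ = √2 := by
  fin_cases j <;> simp [uC, EuclideanSpace.norm_eq, Fin.sum_univ_two] <;> norm_num

theorem norm_sIter_sub_le (n n' : ℕ) (j : Fin 4) : ‖sIter n j - sIter n' j‖ ≤ 2 * √2 := by
  refine (norm_sub_le _ _).trans ?_
  simp only [sIter, norm_uC]
  linarith

theorem norm_one_add_I_mul_sqrt (a ε : ℝ) (hε : 0 ≤ ε) :
    ‖(1 + I) * (√(a * ε) : ℂ)‖ = √2 * √a * √ε := by
  have : ‖(1 : ℂ) + I‖ = √2 := by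
    simpa [one_add_one_eq_two] using Complex.norm_add_mul_I 1 1
  rw [norm_mul, this, Complex.norm_real, Real.norm_of_nonneg (Real.sqrt_nonneg _),
    Real.sqrt_mul' _ hε, mul_assoc]

theorem norm_smul_sIter_sub_le (a b ε : ℝ) (hε : 0 ≤ ε) (n n' : ℕ) (j : Fin 4) :
    ‖((1 + I) * (√(a * ε / b) : ℂ)) • (sIter n j - sIter n' j)‖ ≤ 4 * √(a / b) * √ε := by
  rw [norm_smul, mul_div_right_comm, norm_one_add_I_mul_sqrt _ _ hε]
  calc _ ≤ √2 * √(a / b) * √ε * (2 * √2) := by gcongr; exact norm_sIter_sub_le ..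
    _ = 2 * (√2 * √2) * √(a / b) * √ε := by ring
    _ = 4 * √(a / b) * √ε := by rw [Real.mul_self_sqrt zero_le_two]; ring

theorem process_converges_to_classical_trajectory_general
    (ℏ m : ℝ) (hℏ : 0 < ℏ) (hm : 0 < m)
    (T K : ℝ) (hT : 0 < T) (hK : 0 ≤ K)
    (𝒱 : ℝ → EuclideanSpace ℂ (Fin 2))
    (hLip : ∀ s ∈ Set.Icc (0 : ℝ) T, ∀ t ∈ Set.Icc (0 : ℝ) T,
      ‖𝒱 s - 𝒱 t‖ ≤ K * |s - t|)
    (Z₀ : EuclideanSpace ℂ (Fin 2))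
    (Z : ℝ → Fin 4 → ℕ → EuclideanSpace ℂ (Fin 2))
    (hZ0 : ∀ ε ∈ Set.Ioc (0 : ℝ) 1, ∀ j, Z ε j 0 = Z₀)
    (hZ : ∀ ε ∈ Set.Ioc (0 : ℝ) 1, ∀ j n, Z ε j (n + 1) = Z ε j n
      + ε • 𝒱 (((4 * ((n + 1) / 4) : ℕ) : ℝ) * ε)
      + ((1 + I) * (Real.sqrt (ℏ * ε / (4 * m)) : ℂ)) • (sIter (n + 1) j - sIter n j))
    (Zc : ℝ → EuclideanSpace ℂ (Fin 2))
    (hZc : ∀ t, Zc t = Z₀ + ∫ σ in (0 : ℝ)..t, 𝒱 σ) :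
    ∃ C > 0, ∀ ε ∈ Set.Ioc (0 : ℝ) 1, ∀ (j : Fin 4) (n : ℕ),
      (n : ℝ) * ε ≤ T →
      ‖Z ε j n - Zc ((n : ℝ) * ε)‖ ≤ C * Real.sqrt ε := by
  refine ⟨3 * K * T + 4 * √(ℏ / (4 * m)), by positivity, ?_⟩
  rintro ε hε j n hnT
  have hε0 : 0 ≤ ε := hε.1.le
  set γ : ℂ := (1 + I) * (√(ℏ * ε / (4 * m)) : ℂ)
  set t : ℕ → ℝ := fun k => ((4 * ((k + 1) / 4) : ℕ) : ℝ) * ε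
  have hclosed : Z ε j n = Z₀ + ∑ k ∈ range n, ε • 𝒱 (t k) + γ • (sIter n j - sIter 0 j) := by
    rw [← hZ0 ε hε j, smul_sub]
    exact eq_add_sum_add_sub_of_forall_succ (x := Z ε j) (w := fun k => γ • sIter k j)
      (fun k => by rw [hZ ε hε j k, smul_sub]) n
  have hLip' : LipschitzOnWith ⟨K, hK⟩ 𝒱 (Icc 0 T) := .of_dist_le_mul fun s hs t ht => by
    rw [dist_eq_norm, Real.dist_eq]
    exact hLip s hs t ht
  have hriemann := norm_sum_smul_sub_intervalIntegral_le hLip' hε0 hnT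
    (fun k hk => four_mul_succ_div_four_mul_mem_Icc hk hε0 hnT)
    (fun k _ σ hσ => abs_four_mul_succ_div_four_mul_sub_le hε0 hσ)
  have hε_le : ε * (n * ε) ≤ √ε * T :=
    mul_le_mul (Real.le_sqrt_self_iff.2 hε.2) hnT (by positivity) (Real.sqrt_nonneg ε)
  calc ‖Z ε j n - Zc (n * ε)‖
      = ‖(∑ k ∈ range n, ε • 𝒱 (t k) - ∫ σ in (0 : ℝ)..n * ε, 𝒱 σ)
          + γ • (sIter n j - sIter 0 j)‖ := by rw [hclosed, hZc]; congr 1; abel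
    _ ≤ K * (3 * ε) * (n * ε) + 4 * √(ℏ / (4 * m)) * √ε :=
        norm_add_le_of_le hriemann (norm_smul_sIter_sub_le ℏ (4 * m) ε hε0 n 0 j)
    _ ≤ (3 * K * T + 4 * √(ℏ / (4 * m))) * √ε := by nlinarith

/-- Theorem 1: if `𝒱` is Lipschitz on `[0,T]` and
`Z̃(t) = Z₀ + ∫₀ᵗ 𝒱(σ) dσ`, then there is `C > 0` such that for every
`ε ∈ (0,1]`, every `j` and every `n` with `nε ≤ T`,
`‖Z^j_ε(nε) − Z̃(nε)‖ ≤ C √ε`; so each process converges to the classical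
trajectory as `ε → 0⁺`. Here `Z ε j n` denotes `Z^j_ε(nε)` for the family of
processes indexed by the time step `ε`. -/
theorem process_converges_to_classical_trajectory
    (ℏ m : ℝ) (hℏ : 0 < ℏ) (hm : 0 < m)
    (T K : ℝ) (hT : 0 < T) (hK : 0 ≤ K)
    (𝒱 : ℝ → EuclideanSpace ℂ (Fin 2)) (h𝒱 : Continuous 𝒱)
    (hLip : ∀ s ∈ Set.Icc (0 : ℝ) T, ∀ t ∈ Set.Icc (0 : ℝ) T,
      ‖𝒱 s - 𝒱 t‖ ≤ K * |s - t|)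
    (Z₀ : EuclideanSpace ℂ (Fin 2))
    (Z : ℝ → Fin 4 → ℕ → EuclideanSpace ℂ (Fin 2))
    (hZ0 : ∀ ε ∈ Set.Ioc (0 : ℝ) 1, ∀ j, Z ε j 0 = Z₀)
    (hZ : ∀ ε ∈ Set.Ioc (0 : ℝ) 1, ∀ j n, Z ε j (n + 1) = Z ε j n
      + ε • 𝒱 (((4 * ((n + 1) / 4) : ℕ) : ℝ) * ε)
      + ((1 + I) * (Real.sqrt (ℏ * ε / (4 * m)) : ℂ)) • (sIter (n + 1) j - sIter n j))
    (Zc : ℝ → EuclideanSpace ℂ (Fin 2))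
    (hZc : ∀ t, Zc t = Z₀ + ∫ σ in (0 : ℝ)..t, 𝒱 σ) :
    ∃ C > 0, ∀ ε ∈ Set.Ioc (0 : ℝ) 1, ∀ (j : Fin 4) (n : ℕ),
      (n : ℝ) * ε ≤ T →
      ‖Z ε j n - Zc ((n : ℝ) * ε)‖ ≤ C * Real.sqrt ε :=
  process_converges_to_classical_trajectory_general ℏ m hℏ hm T K hT hK 𝒱 hLip Z₀ Z hZ0 hZ Zc hZc
end
end

section
/- (Sufficient condition for a complex minimum) Let f be holomorphic on ℂⁿ and write P(X,Y) = Re f(X+iY). Assume f is convex in the complex sense, i.e. X ↦ P(X,Y) is convex for every Y ∈ ℝⁿ and Y ↦ P(X,Y) is concave for every X ∈ ℝⁿ. If Z₀ = X₀+iY₀ satisfies ∂f/∂z_k(Z₀) = 0 for all k, then Z₀ is a complex minimum of f: P(X₀,Y) ≤ P(X₀,Y₀) ≤ P(X,Y₀) for all X, Y ∈ ℝⁿ. -/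
/-!
At `Z₀` the complex derivative of `f` vanishes, and the real derivatives of the slices
`X ↦ Re f(X + iY₀)` and `Y ↦ Re f(X₀ + iY)` are obtained from it by composition, so they vanish
too. A convex function with a critical point attains its minimum there, and a concave one its
maximum.
-/

noncomputable section

open Complex Finset

/-- Combine real and imaginary parts `X, Y ∈ ℝⁿ` into `Z = X + iY ∈ ℂⁿ`. -/
def toCpx {n : ℕ} (X Y : Fin n → ℝ) : Fin n → ℂ := fun k => (X k : ℂ) + (Y k : ℂ) * I

section CriticalPoint

variable {E : Type*} [NormedAddCommGroup E] [NormedSpace ℝ E] {s : Set E} {g : E → ℝ} {x₀ x : E}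

/-- On the line through `x₀` and `x` this is the one-variable fact that a convex function lies
above its tangent. -/
theorem ConvexOn.le_of_hasFDerivAt_eq_zero (hg : ConvexOn ℝ s g) (hx₀ : x₀ ∈ s) (hx : x ∈ s)
    (hd : HasFDerivAt g (0 : E →L[ℝ] ℝ) x₀) : g x₀ ≤ g x := by
  let line : ℝ →ᵃ[ℝ] E := AffineMap.lineMap x₀ x
  have hslice : HasDerivAt (g ∘ line) 0 0 := by
    simpa using (by simpa [line] using hd : HasFDerivAt g 0 (line 0)).comp_hasDerivAt 0
      AffineMap.hasDerivAt_lineMap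
  have hslope := (hg.comp_affineMap line).le_slope_of_hasDerivAt (x := 0) (y := 1)
    (by simpa [line] using hx₀) (by simpa [line] using hx) one_pos hslice
  simpa [slope_def_field, line] using hslope

theorem ConcaveOn.le_of_hasFDerivAt_eq_zero (hg : ConcaveOn ℝ s g) (hx₀ : x₀ ∈ s) (hx : x ∈ s)
    (hd : HasFDerivAt g (0 : E →L[ℝ] ℝ) x₀) : g x ≤ g x₀ := by
  simpa using hg.neg.le_of_hasFDerivAt_eq_zero hx₀ hx (by simpa using hd.neg)

end CriticalPoint

theorem ContinuousLinearMap.eq_zero_of_forall_apply_single_one {𝕜 ι F : Type*}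
    [NontriviallyNormedField 𝕜] [Finite ι] [DecidableEq ι] [NormedAddCommGroup F]
    [NormedSpace 𝕜 F] {L : (ι → 𝕜) →L[𝕜] F} (h : ∀ k, L (Pi.single k 1) = 0) : L = 0 :=
  coe_injective <| (Pi.basisFun 𝕜 ι).ext fun k => by simpa using h k

theorem HasFDerivAt.re_comp_of_eq_zero {E V : Type*} [NormedAddCommGroup E] [NormedSpace ℝ E]
    [NormedAddCommGroup V] [NormedSpace ℂ V] {f : V → ℂ} {z : V}
    (hf : HasFDerivAt f (0 : V →L[ℂ] ℂ) z) {φ : E → V} {x : E} (hφ : DifferentiableAt ℝ φ x)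
    (hφx : φ x = z) : HasFDerivAt (fun e => (f (φ e)).re) (0 : E →L[ℝ] ℝ) x := by
  subst hφx
  exact (reCLM.hasFDerivAt.comp x ((hf.restrictScalars ℝ).comp x hφ.hasFDerivAt)).congr_fderiv
    (by ext; simp)

theorem differentiable_toCpx_left {n : ℕ} (Y : Fin n → ℝ) :
    Differentiable ℝ fun X => toCpx X Y := by
  unfold toCpx; fun_prop

theorem differentiable_toCpx_right {n : ℕ} (X : Fin n → ℝ) :
    Differentiable ℝ fun Y => toCpx X Y := by
  unfold toCpx; fun_prop

/-- sufficient condition for a complex minimum: if `f` is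
holomorphic on `ℂⁿ`, convex in the complex sense (i.e. `X ↦ P(X,Y)` is convex
and `Y ↦ P(X,Y)` is concave, where `P(X,Y) = Re f(X+iY)`), and
`∂f/∂z_k (Z₀) = 0` for all `k`, then `Z₀ = X₀ + iY₀` is a complex minimum:
`P(X₀,Y) ≤ P(X₀,Y₀) ≤ P(X,Y₀)` for all `X, Y ∈ ℝⁿ`. -/
theorem complex_minimum_sufficient_condition
    (n : ℕ) (f : (Fin n → ℂ) → ℂ) (hf : Differentiable ℂ f)
    (hconv : ∀ Y : Fin n → ℝ,
      ConvexOn ℝ Set.univ (fun X : Fin n → ℝ => (f (toCpx X Y)).re))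
    (hconc : ∀ X : Fin n → ℝ,
      ConcaveOn ℝ Set.univ (fun Y : Fin n → ℝ => (f (toCpx X Y)).re))
    (X₀ Y₀ : Fin n → ℝ)
    (hcrit : ∀ k : Fin n, fderiv ℂ f (toCpx X₀ Y₀) (Pi.single k 1) = 0) :
    ∀ X Y : Fin n → ℝ,
      (f (toCpx X₀ Y)).re ≤ (f (toCpx X₀ Y₀)).re
        ∧ (f (toCpx X₀ Y₀)).re ≤ (f (toCpx X Y₀)).re := by
  have hf₀ : HasFDerivAt f 0 (toCpx X₀ Y₀) :=
    ContinuousLinearMap.eq_zero_of_forall_apply_single_one hcrit ▸ (hf _).hasFDerivAt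
  intro X Y
  exact ⟨(hconc X₀).le_of_hasFDerivAt_eq_zero (Set.mem_univ _) (Set.mem_univ _)
      (hf₀.re_comp_of_eq_zero (differentiable_toCpx_right X₀ Y₀) rfl),
    (hconv Y₀).le_of_hasFDerivAt_eq_zero (Set.mem_univ _) (Set.mem_univ _)
      (hf₀.re_comp_of_eq_zero (differentiable_toCpx_left Y₀ X₀) rfl)⟩
end
end
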